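/- Let F ⊂ L₂(μ), T ∈ L₂(μ), D = sup_{f∈F} ‖T − f‖, ρ = ‖T − f*‖ where f* minimizes ‖f − T‖ over F, and T_λ = (1−λ)T + λf* for 0 ≤ λ ≤ 1/2. Then there exists an absolute constant c > 0 such that for any f ∈ F and r > 0: if r/λ ≤ c (ρ/D) ‖f − f*‖², then E𝓛_λ(f) ≥ r, where 𝓛_λ(f) = (f − T_λ)² − (f* − T_λ)². -/

import Mathlib

/-!
Write `T_λ = (1 - λ) T + λ f*`. Expanding the squares gives
`E𝓛_λ(f) = (1 - λ) (‖f - T‖² - ‖f* - T‖²) + λ ‖f - f*‖²`, and the first term is nonnegative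
because `f*` minimizes the distance to `T`. Hence `E𝓛_λ(f) ≥ λ ‖f - f*‖²`, and since `f* ∈ F`
forces `ρ ≤ D`, the theorem holds with `c = 1`.
-/

open MeasureTheory

section ShiftedLoss

variable {Ω : Type*} [MeasurableSpace Ω] {μ : Measure Ω} {T f g : Ω → ℝ}

theorem integral_shiftedLoss_eq (hT : MemLp T 2 μ) (hf : MemLp f 2 μ) (hg : MemLp g 2 μ)
    (l : ℝ) :
    ∫ ω, ((f ω - ((1 - l) * T ω + l * g ω)) ^ 2 - (g ω - ((1 - l) * T ω + l * g ω)) ^ 2) ∂μ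
      = (1 - l) * ((∫ ω, (f ω - T ω) ^ 2 ∂μ) - ∫ ω, (g ω - T ω) ^ 2 ∂μ)
        + l * ∫ ω, (f ω - g ω) ^ 2 ∂μ := by
  have hfT : Integrable (fun ω => (f ω - T ω) ^ 2) μ := (hf.sub hT).integrable_sq
  have hgT : Integrable (fun ω => (g ω - T ω) ^ 2) μ := (hg.sub hT).integrable_sq
  have hfg : Integrable (fun ω => (f ω - g ω) ^ 2) μ := (hf.sub hg).integrable_sq
  calc _ = ∫ ω, ((1 - l) * ((f ω - T ω) ^ 2 - (g ω - T ω) ^ 2) + l * (f ω - g ω) ^ 2) ∂μ :=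
        integral_congr_ae (Filter.Eventually.of_forall fun ω => by ring)
    _ = _ := by
      have hexcess : Integrable (fun ω => (1 - l) * ((f ω - T ω) ^ 2 - (g ω - T ω) ^ 2)) μ :=
        (hfT.sub hgT).const_mul _
      rw [integral_add hexcess (hfg.const_mul _), integral_const_mul,
        integral_const_mul, integral_sub hfT hgT]

theorem mul_integral_sq_sub_le_integral_shiftedLoss (hT : MemLp T 2 μ) (hf : MemLp f 2 μ)
    (hg : MemLp g 2 μ) (hmin : ∫ ω, (g ω - T ω) ^ 2 ∂μ ≤ ∫ ω, (f ω - T ω) ^ 2 ∂μ)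
    {l : ℝ} (hl : l ≤ 1) :
    l * ∫ ω, (f ω - g ω) ^ 2 ∂μ ≤
      ∫ ω, ((f ω - ((1 - l) * T ω + l * g ω)) ^ 2 - (g ω - ((1 - l) * T ω + l * g ω)) ^ 2) ∂μ := by
  rw [integral_shiftedLoss_eq hT hf hg]
  linarith [mul_nonneg (sub_nonneg.2 hl) (sub_nonneg.2 hmin)]

end ShiftedLoss

theorem Real.div_sSup_le_one_of_mem {S : Set ℝ} {x : ℝ} (hx : x ∈ S) (hx0 : 0 ≤ x) :
    x / sSup S ≤ 1 := by
  by_cases hS : BddAbove S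
  · have hxS := le_csSup hS hx
    exact div_le_one_of_le₀ hxS (hx0.trans hxS)
  · simp [Real.sSup_of_not_bddAbove hS]

/-- with `D = sup_{f∈F} ‖T-f‖`, `ρ = ‖T-f*‖`, `f*` a minimizer of
`‖f-T‖` over `F` and `0 ≤ λ ≤ 1/2`, there is an absolute constant `c > 0` such that
for `f ∈ F` and `r > 0`, if `r ≤ λ · c (ρ/D) ‖f-f*‖²` then `E𝓛_λ(f) ≥ r`.
(The norm is the `L₂(μ)` norm, `‖g‖² = ∫ g² dμ`.) -/
theorem stmt_7 :
    ∃ c : ℝ, 0 < c ∧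
      ∀ (Ω : Type) [MeasurableSpace Ω] (μ : Measure Ω) [IsProbabilityMeasure μ]
        (F : Set (Ω → ℝ)) (T fstar : Ω → ℝ),
        MemLp T 2 μ → MemLp fstar 2 μ → (∀ g ∈ F, MemLp g 2 μ) →
        fstar ∈ F →
        (∀ g ∈ F, ∫ ω, (fstar ω - T ω) ^ 2 ∂μ ≤ ∫ ω, (g ω - T ω) ^ 2 ∂μ) →
        ∀ D ρ : ℝ,
        D = sSup ((fun g => Real.sqrt (∫ ω, (T ω - g ω) ^ 2 ∂μ)) '' F) →
        ρ = Real.sqrt (∫ ω, (T ω - fstar ω) ^ 2 ∂μ) →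
        ∀ (l : ℝ), 0 ≤ l → l ≤ 1 / 2 →
        ∀ f ∈ F, ∀ r : ℝ, 0 < r →
        r ≤ l * (c * (ρ / D) * ∫ ω, (f ω - fstar ω) ^ 2 ∂μ) →
        r ≤ ∫ ω, ((f ω - ((1 - l) * T ω + l * fstar ω)) ^ 2
              - (fstar ω - ((1 - l) * T ω + l * fstar ω)) ^ 2) ∂μ := by
  refine ⟨1, one_pos, ?_⟩
  intro Ω _ μ _ F T fstar hT hfstar hF hfstarF hmin D ρ hD hρ l hl0 hl f hf r _ hr
  have hρD : ρ / D ≤ 1 := by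
    rw [hD, hρ]
    exact Real.div_sSup_le_one_of_mem ⟨fstar, hfstarF, rfl⟩ (Real.sqrt_nonneg _)
  have hdist : 0 ≤ ∫ ω, (f ω - fstar ω) ^ 2 ∂μ := integral_nonneg fun ω => sq_nonneg _
  calc r ≤ l * (1 * (ρ / D) * ∫ ω, (f ω - fstar ω) ^ 2 ∂μ) := hr
    _ ≤ l * ∫ ω, (f ω - fstar ω) ^ 2 ∂μ := by
      rw [one_mul]
      exact mul_le_mul_of_nonneg_left (mul_le_of_le_one_left hdist hρD) hl0
    _ ≤ _ := mul_integral_sq_sub_le_integral_shiftedLoss hT (hF f hf) hfstar (hmin f hf)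
      (by linarith)
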